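/- arXiv:1105.3266 — 3 statements merged into one kernel-verified Lean document; each statement's English description precedes it below -/
import Mathlib

section
/- Let x(·) be a trajectory of a discrete-time system x(i+1) = f(x(i), μ(x(i))) with running cost l ≥ 0. If there exists a function V: X → ℝ≥0 and α ∈ (0,1] such that V(x(i)) ≥ V(x(i+1)) + α·l(x(i), μ(x(i))) for all i ∈ ℕ, then for every n ∈ ℕ, α·∑_{i=n}^∞ l(x(i), μ(x(i))) ≤ V(x(n)). (Relaxed Lyapunov inequality implies a bound on infinite-horizon closed-loop cost.) -/
open scoped ENNReal NNReal

/-- Relaxed Lyapunov inequality implies a bound on infinite-horizon closed-loop cost. -/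
theorem stmt_0 {X U : Type*} (f : X → U → X) (μ : X → U) (l : X → U → ℝ≥0)
    (V : X → ℝ≥0) (x : ℕ → X)
    (hx : ∀ i, x (i + 1) = f (x i) (μ (x i)))
    (α : ℝ≥0) (hα0 : 0 < α) (hα1 : α ≤ 1)
    (hLyap : ∀ i : ℕ, V (x (i + 1)) + α * l (x i) (μ (x i)) ≤ V (x i)) :
    ∀ n : ℕ, (α : ℝ≥0∞) * ∑' i : ℕ, (l (x (n + i)) (μ (x (n + i))) : ℝ≥0∞)
      ≤ (V (x n) : ℝ≥0∞) := by
  intro n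
  have key : ∀ k : ℕ,
      (∑ i ∈ Finset.range k, (α : ℝ≥0∞) * (l (x (n + i)) (μ (x (n + i))) : ℝ≥0∞))
        + (V (x (n + k)) : ℝ≥0∞) ≤ (V (x n) : ℝ≥0∞) := by
    intro k
    induction k with
    | zero => simp
    | succ m ih =>
      have h1 : (V (x (n + m + 1)) : ℝ≥0∞)
          + (α : ℝ≥0∞) * (l (x (n + m)) (μ (x (n + m))) : ℝ≥0∞)
          ≤ (V (x (n + m)) : ℝ≥0∞) := by exact_mod_cast hLyap (n + m)
      calc (∑ i ∈ Finset.range (m + 1), (α : ℝ≥0∞) * (l (x (n + i)) (μ (x (n + i))) : ℝ≥0∞))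
            + (V (x (n + (m + 1))) : ℝ≥0∞)
          = (∑ i ∈ Finset.range m, (α : ℝ≥0∞) * (l (x (n + i)) (μ (x (n + i))) : ℝ≥0∞))
            + ((V (x (n + m + 1)) : ℝ≥0∞)
              + (α : ℝ≥0∞) * (l (x (n + m)) (μ (x (n + m))) : ℝ≥0∞)) := by
              rw [Finset.sum_range_succ, show n + (m + 1) = n + m + 1 from rfl]; ring
        _ ≤ (∑ i ∈ Finset.range m, (α : ℝ≥0∞) * (l (x (n + i)) (μ (x (n + i))) : ℝ≥0∞))
            + (V (x (n + m)) : ℝ≥0∞) := by gcongr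
        _ ≤ (V (x n) : ℝ≥0∞) := ih
  rw [← ENNReal.tsum_mul_left]
  rw [ENNReal.tsum_eq_iSup_sum]; refine iSup_le ?_
  intro s
  obtain ⟨k, hk⟩ := s.exists_nat_subset_range
  calc ∑ i ∈ s, (α : ℝ≥0∞) * (l (x (n + i)) (μ (x (n + i))) : ℝ≥0∞)
      ≤ ∑ i ∈ Finset.range k, (α : ℝ≥0∞) * (l (x (n + i)) (μ (x (n + i))) : ℝ≥0∞) :=
        Finset.sum_le_sum_of_subset hk
    _ ≤ (V (x n) : ℝ≥0∞) := le_trans (le_add_right le_rfl) (key k)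
end

section
/- A posteriori suboptimality estimate: Let μ_N be a feedback with associated closed-loop trajectory x(i+1) = f(x(i), μ_N(x(i))). Suppose V_N: X → ℝ≥0 satisfies V_N(x(i)) ≥ V_N(x(i+1)) + α·l(x(i), μ_N(x(i))) for some α ∈ (0,1] and all i ∈ ℕ, and suppose V_N(y) ≤ V_∞(y) for all states y on the trajectory. Then α·V_∞(x(i)) ≤ α·V_∞^{μ_N}(x(i)) ≤ V_N(x(i)) ≤ V_∞(x(i)) for all i, where V_∞^{μ_N}(x(i)) = ∑_{j=i}^∞ l(x(j), μ_N(x(j))). -/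
/-! Since `V_N` decreases by at least `α l` along the closed loop and is nonnegative, the
partial sums of `α l` telescope to at most `V_N(x(i))`; the closed-loop cost is the cost of one
admissible control sequence, so it dominates `V_∞`. -/

open scoped ENNReal NNReal

/-- The trajectory generated by control sequence `u` from initial state `x0`. -/
def traj {X U : Type*} (f : X → U → X) (x0 : X) (u : ℕ → U) : ℕ → X
  | 0 => x0
  | k + 1 => f (traj f x0 u k) (u k)

/-- Infinite-horizon optimal value function. -/
noncomputable def Vinf {X U : Type*} (f : X → U → X) (l : X → U → ℝ≥0) (x : X) : ℝ≥0∞ :=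
  ⨅ u : ℕ → U, ∑' i : ℕ, (l (traj f x u i) (u i) : ℝ≥0∞)

section

variable {X U : Type*} {f : X → U → X}

theorem traj_eq_of_succ {x : ℕ → X} {u : ℕ → U} (hx : ∀ n, x (n + 1) = f (x n) (u n)) :
    traj f (x 0) u = x := by
  funext n
  induction n with
  | zero => rfl
  | succ n ih => rw [traj, ih, hx]

theorem Vinf_le_tsum_of_succ (l : X → U → ℝ≥0) {x : ℕ → X} {u : ℕ → U}
    (hx : ∀ n, x (n + 1) = f (x n) (u n)) :
    Vinf f l (x 0) ≤ ∑' n, (l (x n) (u n) : ℝ≥0∞) := by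
  calc Vinf f l (x 0) ≤ ∑' n, (l (traj f (x 0) u n) (u n) : ℝ≥0∞) := iInf_le _ u
    _ = ∑' n, (l (x n) (u n) : ℝ≥0∞) := by rw [traj_eq_of_succ hx]

end

theorem ENNReal.tsum_le_of_succ_add_le {V c : ℕ → ℝ≥0∞} (h : ∀ n, V (n + 1) + c n ≤ V n) :
    ∑' n, c n ≤ V 0 := by
  have partial_sum : ∀ n, V n + ∑ k ∈ Finset.range n, c k ≤ V 0 := by
    intro n
    induction n with
    | zero => simp
    | succ n ih =>
      calc V (n + 1) + ∑ k ∈ Finset.range (n + 1), c k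
          = V (n + 1) + c n + ∑ k ∈ Finset.range n, c k := by
            rw [Finset.sum_range_succ]; ring
        _ ≤ V n + ∑ k ∈ Finset.range n, c k := by gcongr; exact h n
        _ ≤ V 0 := ih
  exact ENNReal.tsum_le_of_sum_range_le fun n => le_of_add_le_right (partial_sum n)

theorem stmt_4_general {X U : Type*} (f : X → U → X) (μN : X → U) (l : X → U → ℝ≥0)
    (VN : X → ℝ≥0) (x : ℕ → X)
    (hx : ∀ i, x (i + 1) = f (x i) (μN (x i)))
    (α : ℝ≥0)
    (hLyap : ∀ i : ℕ, VN (x (i + 1)) + α * l (x i) (μN (x i)) ≤ VN (x i))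
    (hVN : ∀ i : ℕ, (VN (x i) : ℝ≥0∞) ≤ Vinf f l (x i)) :
    ∀ i : ℕ,
      (α : ℝ≥0∞) * Vinf f l (x i)
          ≤ (α : ℝ≥0∞) * ∑' j : ℕ, (l (x (i + j)) (μN (x (i + j))) : ℝ≥0∞) ∧
      (α : ℝ≥0∞) * ∑' j : ℕ, (l (x (i + j)) (μN (x (i + j))) : ℝ≥0∞) ≤ (VN (x i) : ℝ≥0∞) ∧
      (VN (x i) : ℝ≥0∞) ≤ Vinf f l (x i) := by
  intro i
  have shifted : ∀ j, x (i + (j + 1)) = f (x (i + j)) (μN (x (i + j))) := fun j => hx (i + j)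
  refine ⟨mul_le_mul_right (Vinf_le_tsum_of_succ l shifted) _, ?_, hVN i⟩
  rw [← ENNReal.tsum_mul_left]
  refine ENNReal.tsum_le_of_succ_add_le (V := fun j => (VN (x (i + j)) : ℝ≥0∞)) fun j => ?_
  exact_mod_cast hLyap (i + j)

/-- A posteriori suboptimality estimate: under the relaxed Lyapunov inequality with
`V_N ≤ V_∞` along the trajectory, `α V_∞(x(i)) ≤ α V_∞^{μ_N}(x(i)) ≤ V_N(x(i)) ≤ V_∞(x(i))`,
where `V_∞^{μ_N}(x(i)) = ∑_{j=i}^∞ l(x(j), μ_N(x(j)))`. -/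
theorem stmt_4 {X U : Type*} (f : X → U → X) (μN : X → U) (l : X → U → ℝ≥0)
    (VN : X → ℝ≥0) (x : ℕ → X)
    (hx : ∀ i, x (i + 1) = f (x i) (μN (x i)))
    (α : ℝ≥0) (hα0 : 0 < α) (hα1 : α ≤ 1)
    (hLyap : ∀ i : ℕ, VN (x (i + 1)) + α * l (x i) (μN (x i)) ≤ VN (x i))
    (hVN : ∀ i : ℕ, (VN (x i) : ℝ≥0∞) ≤ Vinf f l (x i)) :
    ∀ i : ℕ,
      (α : ℝ≥0∞) * Vinf f l (x i)
          ≤ (α : ℝ≥0∞) * ∑' j : ℕ, (l (x (i + j)) (μN (x (i + j))) : ℝ≥0∞) ∧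
      (α : ℝ≥0∞) * ∑' j : ℕ, (l (x (i + j)) (μN (x (i + j))) : ℝ≥0∞) ≤ (VN (x i) : ℝ≥0∞) ∧
      (VN (x i) : ℝ≥0∞) ≤ Vinf f l (x i) :=
  stmt_4_general f μN l VN x hx α hLyap hVN
end

section
/- Shortening strategy correctness: Let u* be an optimal control sequence for horizon N_i starting at x(i), with open-loop trajectory x_{u*}(k). Suppose there exists ī with 0 ≤ ī < N_i such that V_{N_i−k}(x_{u*}(k)) − V_{N_i−k}(x_{u*}(k+1)) ≥ ᾱ·l(x_{u*}(k), u*(k)) for all 0 ≤ k ≤ ī. If the closed loop is defined by setting N_{i+k} = N_i − k and μ_{N_{i+k}}(x(i+k)) = u*(k) for 0 ≤ k ≤ ī−1, then the closed-loop trajectory satisfies x(i+k) = x_{u*}(k), and the relaxed Lyapunov inequality V_{N_{j}}(x(j)) ≥ V_{N_{j}}(x(j+1)) + ᾱ·l(x(j), μ_{N_j}(x(j))) holds for j = i, …, i+ī−1. -/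
/-- Shortening strategy correctness: if the optimal open-loop control `u*` for horizon
`N_i` at `x(i)` satisfies the decrease condition along its open-loop trajectory for
`0 ≤ k ≤ ī`, then applying `u*(k)` at step `i+k` with horizon `N_{i+k} = N_i − k`
makes the closed loop coincide with the open loop and the relaxed Lyapunov inequality
hold for `j = i, …, i+ī−1` with degree `ᾱ`. -/
theorem stmt_8 {X U : Type*} (f : X → U → X) (l : X → U → ℝ) (hl : ∀ y u, 0 ≤ l y u)
    (VN : ℕ → X → ℝ) (Ni : ℕ) (i ibar : ℕ) (hibar : ibar < Ni)
    (ustar : ℕ → U) (xol : ℕ → X) (x : ℕ → X)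
    (hxol0 : xol 0 = x i)
    (hxol : ∀ k, xol (k + 1) = f (xol k) (ustar k))
    (hopt : VN Ni (x i) = ∑ k ∈ Finset.range Ni, l (xol k) (ustar k))
    (abar : ℝ) (habar0 : 0 < abar) (habar1 : abar < 1)
    (hdec : ∀ k, k ≤ ibar →
      abar * l (xol k) (ustar k) ≤ VN (Ni - k) (xol k) - VN (Ni - k) (xol (k + 1)))
    (hcl : ∀ k, k < ibar → x (i + k + 1) = f (x (i + k)) (ustar k)) :
    (∀ k, k ≤ ibar → x (i + k) = xol k) ∧
    (∀ k, k < ibar →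
      VN (Ni - k) (x (i + k + 1)) + abar * l (x (i + k)) (ustar k)
        ≤ VN (Ni - k) (x (i + k))) := by
  have hcoin : ∀ k, k ≤ ibar → x (i + k) = xol k := by
    intro k
    induction k with
    | zero => intro _; simpa using hxol0.symm
    | succ n ih =>
      intro hn
      have hn' : n < ibar := Nat.lt_of_succ_le hn
      rw [← Nat.add_assoc, hcl n hn', ih (le_of_lt hn'), hxol]
  refine ⟨hcoin, fun k hk => ?_⟩
  have h1 := hcoin k (le_of_lt hk)
  have h2 : x (i + k + 1) = xol (k + 1) := by
    rw [hcl k hk, h1, hxol]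
  rw [h1, h2]
  linarith [hdec k (le_of_lt hk)]
end
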